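/- Under the constrained calibration setup, suppose the supportedness condition $\lambda_{\min} \le \lambda_{\max}$ holds. Then for every finite real $\lambda_R$ with $\lambda_{\min} \le \lambda_R \le \lambda_{\max}$, the constrained minimizer $\widehat{W}$ is also a minimizer of the penalized objective over the whole set: $\widehat{W} \in \arg\min_{W' \in \mathcal{Q}} \{ L(W') + \lambda_R \|W' - W_l\|_F^2 \}$. -/

import Mathlib

/-!
Compare `D(W')` with `D(Ŵ)`. If it is smaller, `λ_R ≤ λ_max` bounds `λ_R` by the slope
`(L(W') - L(Ŵ)) / (D(Ŵ) - D(W'))`; if it is larger, `λ_min ≤ λ_R` bounds that slope by `λ_R`;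
either way clearing the positive denominator is the penalized inequality. If the drifts are
equal, `W'` is feasible for the constraint, so `L(Ŵ) ≤ L(W')`.
-/

/-- Frobenius norm of a real matrix. -/
noncomputable def frobNorm {m n : ℕ} (A : Matrix (Fin m) (Fin n) ℝ) : ℝ :=
  Real.sqrt (∑ i, ∑ j, (A i j) ^ 2)

/-- Squared-Frobenius weight drift `D(W') = ‖W' - Wl‖_F²`. -/
noncomputable def drift {m n : ℕ} (Wl W' : Matrix (Fin m) (Fin n) ℝ) : ℝ :=
  (frobNorm (W' - Wl)) ^ 2

/-- `λ_min := max{0, max_{W' ∈ S₊} (L(Ŵ) - L(W')) / (D(W') - D(Ŵ))}` as an extended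
real, with the convention `max ∅ = -∞` (so the outer max gives `0` when `S₊ = ∅`). -/
noncomputable def lamMin {m n : ℕ} (Wl : Matrix (Fin m) (Fin n) ℝ)
    (Q : Finset (Matrix (Fin m) (Fin n) ℝ)) (L : Matrix (Fin m) (Fin n) ℝ → ℝ)
    (What : Matrix (Fin m) (Fin n) ℝ) : EReal :=
  max 0 (sSup {x : EReal | ∃ W' ∈ Q, drift Wl What < drift Wl W' ∧
    x = (((L What - L W') / (drift Wl W' - drift Wl What) : ℝ) : EReal)})

/-- `λ_max := min_{W' ∈ S₋} (L(W') - L(Ŵ)) / (D(Ŵ) - D(W'))` as an extended real,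
with the convention `min ∅ = +∞`. -/
noncomputable def lamMax {m n : ℕ} (Wl : Matrix (Fin m) (Fin n) ℝ)
    (Q : Finset (Matrix (Fin m) (Fin n) ℝ)) (L : Matrix (Fin m) (Fin n) ℝ → ℝ)
    (What : Matrix (Fin m) (Fin n) ℝ) : EReal :=
  sInf {x : EReal | ∃ W' ∈ Q, drift Wl W' < drift Wl What ∧
    x = (((L W' - L What) / (drift Wl What - drift Wl W') : ℝ) : EReal)}

section PenaltyExchange

variable {α : Type*} [Field α] [LinearOrder α] [IsStrictOrderedRing α] {l₀ l d₀ d μ : α}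

theorem add_mul_le_add_mul_of_le_div (hd : d < d₀) (hμ : μ ≤ (l - l₀) / (d₀ - d)) :
    l₀ + μ * d₀ ≤ l + μ * d := by
  rw [le_div_iff₀ (sub_pos.mpr hd)] at hμ
  linarith

theorem add_mul_le_add_mul_of_div_le (hd : d₀ < d) (hμ : (l₀ - l) / (d - d₀) ≤ μ) :
    l₀ + μ * d₀ ≤ l + μ * d := by
  rw [div_le_iff₀ (sub_pos.mpr hd)] at hμ
  linarith

end PenaltyExchange

section SupportBounds

variable {m n : ℕ} {Wl What W' : Matrix (Fin m) (Fin n) ℝ}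
  {Q : Finset (Matrix (Fin m) (Fin n) ℝ)} {L : Matrix (Fin m) (Fin n) ℝ → ℝ}

theorem le_lamMin_of_drift_lt (hW' : W' ∈ Q) (h : drift Wl What < drift Wl W') :
    (((L What - L W') / (drift Wl W' - drift Wl What) : ℝ) : EReal) ≤ lamMin Wl Q L What :=
  le_max_of_le_right (le_sSup ⟨W', hW', h, rfl⟩)

theorem lamMax_le_of_drift_lt (hW' : W' ∈ Q) (h : drift Wl W' < drift Wl What) :
    lamMax Wl Q L What ≤ (((L W' - L What) / (drift Wl What - drift Wl W') : ℝ) : EReal) :=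
  sInf_le ⟨W', hW', h, rfl⟩

end SupportBounds

theorem stmt5_general
    {m n : ℕ} (Wl : Matrix (Fin m) (Fin n) ℝ)
    (Q : Finset (Matrix (Fin m) (Fin n) ℝ))
    (L : Matrix (Fin m) (Fin n) ℝ → ℝ)
    (R : ℝ)
    (What : Matrix (Fin m) (Fin n) ℝ)
    (hWhatR : drift Wl What ≤ R ^ 2)
    (hWhatMin : ∀ W' ∈ Q, drift Wl W' ≤ R ^ 2 → L What ≤ L W')
    (lamR : ℝ)
    (h1 : lamMin Wl Q L What ≤ (lamR : EReal))
    (h2 : (lamR : EReal) ≤ lamMax Wl Q L What) :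
    ∀ W' ∈ Q,
      L What + lamR * drift Wl What ≤ L W' + lamR * drift Wl W' := by
  intro W' hW'
  rcases lt_trichotomy (drift Wl W') (drift Wl What) with hlt | heq | hgt
  · exact add_mul_le_add_mul_of_le_div hlt
      (EReal.coe_le_coe_iff.mp (h2.trans (lamMax_le_of_drift_lt hW' hlt)))
  · rw [heq]
    linarith [hWhatMin W' hW' (heq ▸ hWhatR)]
  · exact add_mul_le_add_mul_of_div_le hgt
      (EReal.coe_le_coe_iff.mp ((le_lamMin_of_drift_lt hW' hgt).trans h1))

/-- Sufficiency direction of the constraint–penalty correspondence: if the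
supportedness condition `λ_min ≤ λ_max` holds, then for every finite `λ_R` with
`λ_min ≤ λ_R ≤ λ_max`, the constrained minimizer `Ŵ` also minimizes the penalized
objective `L(W') + λ_R ‖W' - Wl‖_F²` over all of `Q`. -/
theorem stmt5
    {m n : ℕ} (Wl : Matrix (Fin m) (Fin n) ℝ)
    (Q : Finset (Matrix (Fin m) (Fin n) ℝ))
    (L : Matrix (Fin m) (Fin n) ℝ → ℝ)
    (R : ℝ) (hR : 0 < R)
    (What : Matrix (Fin m) (Fin n) ℝ)
    (hWhatQ : What ∈ Q) (hWhatR : drift Wl What ≤ R ^ 2)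
    (hWhatMin : ∀ W' ∈ Q, drift Wl W' ≤ R ^ 2 → L What ≤ L W')
    (hsupp : lamMin Wl Q L What ≤ lamMax Wl Q L What)
    (lamR : ℝ)
    (h1 : lamMin Wl Q L What ≤ (lamR : EReal))
    (h2 : (lamR : EReal) ≤ lamMax Wl Q L What) :
    ∀ W' ∈ Q,
      L What + lamR * drift Wl What ≤ L W' + lamR * drift Wl W' :=
  stmt5_general Wl Q L R What hWhatR hWhatMin lamR h1 h2
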